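/- Let V : ℝ³ → ℝ be continuous with V(λx) = λ^s V(x) for all λ > 0 and some s > 2, and V(x) > 0 for |x| = 1, let W(x) = V(x) − (1/4) r(x)², and let m = inf_{ℝ³} W. Then every minimizer x₀ of W satisfies r(x₀)² = 4 s m/(2 − s); in particular all points of the set 𝓜 of minimizers of W have the same (strictly positive) distance from the x₃-axis. -/

import Mathlib

open MeasureTheory Filter Topology

noncomputable section

/-- Three-dimensional Euclidean space. -/
abbrev E3 := EuclideanSpace ℝ (Fin 3)

/-- The distance `r(x) = √(x₁² + x₂²)` from `x` to the `x₃`-axis. -/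
def rax (x : E3) : ℝ := Real.sqrt (x 0 ^ 2 + x 1 ^ 2)

/-- The integrand of the 3D Thomas–Fermi functional:
`V ρ − (Ω²/4) r² ρ + g ρ²`. -/
def tfIntegrand (V : E3 → ℝ) (g Ω : ℝ) (ρ : E3 → ℝ) (x : E3) : ℝ :=
  V x * ρ x - Ω ^ 2 / 4 * rax x ^ 2 * ρ x + g * ρ x ^ 2

/-- Admissible densities for the 3D Thomas–Fermi problem: measurable, nonnegative,
in `L¹ ∩ L²`, with finite potential terms and unit mass. -/
def tfAdmissible (V : E3 → ℝ) (ρ : E3 → ℝ) : Prop :=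
  Measurable ρ ∧ (∀ x, 0 ≤ ρ x) ∧ Integrable ρ ∧ Integrable (fun x => ρ x ^ 2) ∧
    Integrable (fun x => V x * ρ x) ∧ Integrable (fun x => rax x ^ 2 * ρ x) ∧
    (∫ x, ρ x) = 1

/-- The 3D Thomas–Fermi energy `E^TF_{g,Ω}`. -/
def ETF (V : E3 → ℝ) (g Ω : ℝ) : ℝ :=
  sInf { e | ∃ ρ : E3 → ℝ, tfAdmissible V ρ ∧ e = ∫ x, tfIntegrand V g Ω ρ x }

/-- The candidate Thomas–Fermi minimizer with chemical potential `μ`: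
`ρ^TF_{g,Ω}(x) = (1/(2g)) [μ + (Ω²/4) r(x)² − V(x)]₊`. -/
def rhoTF (V : E3 → ℝ) (g Ω μ : ℝ) (x : E3) : ℝ :=
  1 / (2 * g) * max (μ + Ω ^ 2 / 4 * rax x ^ 2 - V x) 0

/-- Homogeneity of degree `s`: `V(λx) = λ^s V(x)` for all `λ > 0`. -/
def Homogeneous (V : E3 → ℝ) (s : ℝ) : Prop :=
  ∀ lam : ℝ, 0 < lam → ∀ x : E3, V (lam • x) = lam ^ s * V x

/-- The effective potential `W(x) = V(x) − (1/4) r(x)²`. -/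
def Wpot (V : E3 → ℝ) (x : E3) : ℝ := V x - 1 / 4 * rax x ^ 2

/-!
Homogeneity makes `W` explicit along each ray: `W(t x) = t^s V(x) - t² r(x)²/4`. Since `t = 1`
minimizes this at a minimizer `x₀`, differentiating gives `s V(x₀) = r(x₀)²/2`, and together with
`m = W(x₀) = V(x₀) - r(x₀)²/4` this determines `r(x₀)²`. Because `s > 2` the quadratic term wins
near the origin on any ray off the axis, so `m < 0` and hence `r(x₀) > 0`.
-/

lemma rax_smul {c : ℝ} (hc : 0 ≤ c) (x : E3) : rax (c • x) = c * rax x := by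
  unfold rax
  rw [PiLp.smul_apply, PiLp.smul_apply, smul_eq_mul, smul_eq_mul,
    show (c * x 0) ^ 2 + (c * x 1) ^ 2 = c ^ 2 * (x 0 ^ 2 + x 1 ^ 2) by ring,
    Real.sqrt_mul (sq_nonneg c), Real.sqrt_sq hc]

lemma rax_single_zero_one : rax (EuclideanSpace.single 0 1) = 1 := by
  simp [rax]

lemma Wpot_smul {V : E3 → ℝ} {s c : ℝ} (hhom : Homogeneous V s) (hc : 0 < c) (x : E3) :
    Wpot V (c • x) = c ^ s * V x - c ^ 2 * (rax x ^ 2 / 4) := by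
  rw [Wpot, hhom c hc, rax_smul hc.le]
  ring

lemma mul_eq_two_mul_of_forall_rpow_sub_sq_ge {s a b : ℝ}
    (hmin : ∀ t : ℝ, 0 < t → a - b ≤ t ^ s * a - t ^ 2 * b) : s * a = 2 * b := by
  set f : ℝ → ℝ := fun t => t ^ s * a - t ^ 2 * b
  have hloc : IsLocalMin f 1 := by
    filter_upwards [Ioi_mem_nhds one_pos] with t ht
    simpa [f] using hmin t ht
  have hderiv : HasDerivAt f (s * a - 2 * b) 1 := by
    have h := ((Real.hasDerivAt_rpow_const (p := s) (Or.inl one_ne_zero)).mul_const a).fun_sub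
      ((hasDerivAt_pow 2 (1 : ℝ)).mul_const b)
    simpa using h
  linarith [hloc.hasDerivAt_eq_zero hderiv]

lemma exists_rpow_sub_sq_neg {s : ℝ} (hs : 2 < s) (a : ℝ) {b : ℝ} (hb : 0 < b) :
    ∃ t : ℝ, 0 < t ∧ t ^ s * a - t ^ 2 * b < 0 := by
  have hlim : Tendsto (fun t : ℝ => t ^ (s - 2) * a) (𝓝[>] 0) (𝓝 0) := by
    have h := (Real.continuousAt_rpow_const 0 (s - 2) (Or.inr (by linarith))).tendsto.mul_const a
    rw [Real.zero_rpow (by linarith), zero_mul] at h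
    exact h.mono_left nhdsWithin_le_nhds
  obtain ⟨t, hsmall, ht⟩ :=
    ((hlim.eventually_lt_const hb).and self_mem_nhdsWithin).exists
  refine ⟨t, ht, ?_⟩
  have hsplit : t ^ s = t ^ 2 * t ^ (s - 2) := by
    rw [← Real.rpow_natCast t 2, ← Real.rpow_add ht]
    norm_num
  rw [hsplit]
  nlinarith [pow_pos (show 0 < t from ht) 2]

lemma exists_Wpot_neg {V : E3 → ℝ} {s : ℝ} (hs : 2 < s) (hhom : Homogeneous V s) :
    ∃ x : E3, Wpot V x < 0 := by
  set e : E3 := EuclideanSpace.single 0 1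
  obtain ⟨t, ht, hneg⟩ := exists_rpow_sub_sq_neg hs (V e) (b := rax e ^ 2 / 4)
    (by rw [rax_single_zero_one]; norm_num)
  exact ⟨t • e, by rwa [Wpot_smul hhom ht]⟩

lemma virial_of_isMin_Wpot {V : E3 → ℝ} {s : ℝ} (hhom : Homogeneous V s) {x₀ : E3}
    (hx₀ : ∀ x : E3, Wpot V x₀ ≤ Wpot V x) : 2 * s * V x₀ = rax x₀ ^ 2 := by
  have h := mul_eq_two_mul_of_forall_rpow_sub_sq_ge (s := s) (a := V x₀) (b := rax x₀ ^ 2 / 4)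
    fun t ht => by
      have h := hx₀ (t • x₀)
      rw [Wpot_smul hhom ht, Wpot] at h
      linarith
  linarith

theorem Wpot_minimizers_distance_general (V : E3 → ℝ)
    (s : ℝ) (hs : 2 < s) (hhom : Homogeneous V s)
    (x₀ : E3) (hx₀ : ∀ x : E3, Wpot V x₀ ≤ Wpot V x) :
    rax x₀ ^ 2 = 4 * s * (⨅ x : E3, Wpot V x) / (2 - s) ∧ 0 < rax x₀ := by
  have hinf : (⨅ x : E3, Wpot V x) = V x₀ - 1 / 4 * rax x₀ ^ 2 :=
    ciInf_eq_of_forall_ge_of_forall_gt_exists_lt hx₀ fun _ hw => ⟨x₀, hw⟩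
  have hfoc := virial_of_isMin_Wpot hhom hx₀
  obtain ⟨y, hy⟩ := exists_Wpot_neg hs hhom
  have hneg : V x₀ - 1 / 4 * rax x₀ ^ 2 < 0 := (hx₀ y).trans_lt hy
  have hdist : rax x₀ ^ 2 = 4 * s * (⨅ x : E3, Wpot V x) / (2 - s) := by
    rw [hinf, eq_div_iff (by linarith)]
    linarith
  refine ⟨hdist, lt_of_le_of_ne (Real.sqrt_nonneg _) fun h0 => ?_⟩
  rw [← h0] at hfoc hneg
  nlinarith

/-- **All minimizers of `W = V − r²/4` have the same, strictly positive, distance from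
the rotation axis**: every minimizer `x₀` satisfies `r(x₀)² = 4 s m/(2 − s)`,
where `m = inf W`. -/
theorem Wpot_minimizers_distance (V : E3 → ℝ) (hVc : Continuous V)
    (s : ℝ) (hs : 2 < s) (hhom : Homogeneous V s)
    (hVpos : ∀ x : E3, ‖x‖ = 1 → 0 < V x)
    (x₀ : E3) (hx₀ : ∀ x : E3, Wpot V x₀ ≤ Wpot V x) :
    rax x₀ ^ 2 = 4 * s * (⨅ x : E3, Wpot V x) / (2 - s) ∧ 0 < rax x₀ :=
  Wpot_minimizers_distance_general V s hs hhom x₀ hx₀
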